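/- arXiv:1009.4061 — 2 statements merged into one kernel-verified Lean document; each statement's English description precedes it below -/
import Mathlib

section
/- For any natural numbers r ≠ s, a sequence over {r,s} that equals its own run-length sequence is not eventually periodic. -/
namespace Kola

/-- Run-length encoding of a finite word as (letter, count) pairs. -/
def rle : List ℕ → List (ℕ × ℕ)
  | [] => []
  | a :: l =>
    match rle l with
    | [] => [(a, 1)]
    | (b, n) :: t => if a = b then (b, n + 1) :: t else (a, 1) :: (b, n) :: t

/-- Boundary adjustment for the first run: discard if length ≤ r, extend to s if length in (r,s]. -/
def fixRun (r s : ℕ) : List (ℕ × ℕ) → List (ℕ × ℕ)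
  | [] => []
  | (a, n) :: t => if n ≤ r then t else if n ≤ s then (a, s) :: t else (a, n) :: t

/-- The Kolakoski derivative over the alphabet {r,s}. -/
def D (r s : ℕ) (w : List ℕ) : List ℕ :=
  match rle w with
  | [] => []
  | [(_, n)] => if n < s then [] else [n]
  | ps => ((fixRun r s ((fixRun r s ps).reverse)).reverse).map Prod.snd

/-- A C∞-word over {r,s}: all iterated derivatives are words over {r,s}. -/
def IsCInf (r s : ℕ) (w : List ℕ) : Prop :=
  ∀ k : ℕ, ∀ a ∈ (D r s)^[k] w, a = r ∨ a = s

/-- `t` enumerates the starting indices of the (maximal) runs of the sequence `z`. -/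
def IsRunPartition (z : ℕ → ℕ) (t : ℕ → ℕ) : Prop :=
  t 0 = 0 ∧ StrictMono t ∧
  (∀ k i, t k ≤ i → i < t (k + 1) → z i = z (t k)) ∧
  (∀ k, z (t (k + 1)) ≠ z (t k))

/-- `w` is the run-length sequence of `z`. -/
def IsRunLengthSeq (z w : ℕ → ℕ) : Prop :=
  ∃ t, IsRunPartition z t ∧ ∀ k, w k = t (k + 1) - t k

/-- A Kolakoski sequence over {r,s}: a sequence over {r,s} equal to its own run-length sequence. -/
def IsKolakoski (r s : ℕ) (z : ℕ → ℕ) : Prop :=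
  (∀ n, z n = r ∨ z n = s) ∧ IsRunLengthSeq z z

def EventuallyPeriodic (z : ℕ → ℕ) : Prop :=
  ∃ m q : ℕ, 1 ≤ q ∧ ∀ i, m ≤ i → z (i + q) = z i

/-- `w` occurs as a factor of the infinite sequence `z`. -/
def FactorOf (w : List ℕ) (z : ℕ → ℕ) : Prop :=
  ∃ i, w = (List.range w.length).map fun k => z (i + k)

/-- Letter-exchange on words over {r,s}. -/
def exch (r s : ℕ) (w : List ℕ) : List ℕ := w.map fun a => if a = r then s else r

/-- Number of occurrences of `w` as a factor of the prefix of length `n` of `z`. -/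
def countOcc (z : ℕ → ℕ) (w : List ℕ) (n : ℕ) : ℕ :=
  ((Finset.range n).filter fun i => i + w.length ≤ n ∧ ∀ k < w.length, z (i + k) = w.getD k 0).card

/-- All words of length n over {r,s}. -/
def allWords (r s : ℕ) : ℕ → Finset (List ℕ)
  | 0 => {[]}
  | n + 1 => (allWords r s n).image (List.cons r) ∪ (allWords r s n).image (List.cons s)


/-!
If `z` is its own run-length sequence and has eventual period `q`, then far out the set of run
starts is invariant under the shift by `q`, so shifting by `q` positions moves every run start
by a fixed number `c` of runs. Since the `k`-th run has length `z k`, the number `c` is again an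
eventual period of `z`, and `c ≤ q` because runs have positive length. Descending on `q`, we may
assume `c = q`; then all runs eventually have length `1`, so `z` is eventually `1`, which
contradicts the alternation of consecutive runs.
-/

lemma _root_.StrictMono.apply_succ_le_of_apply_lt {t : ℕ → ℕ} (ht : StrictMono t) {a b : ℕ}
    (h : t a < t b) : t (a + 1) ≤ t b :=
  ht.monotone (ht.lt_iff_lt.mp h)

lemma _root_.StrictMono.apply_succ_eq_of_apply_add_eq {t : ℕ → ℕ} (ht : StrictMono t) {k₀ q : ℕ}
    (hq : 0 < q) (hshift : ∀ k ≥ k₀, t (k + q) = t k + q) {k : ℕ} (hk : k₀ ≤ k) :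
    t (k + 1) = t k + 1 := by
  have hlt : t k < t (k + 1) := ht (Nat.lt_succ_self k)
  have hle : q - 1 + t (k + 1) ≤ t (q - 1 + (k + 1)) := ht.add_le_nat _ _
  rw [show q - 1 + (k + 1) = k + q by omega, hshift k hk] at hle
  omega

lemma apply_add_succ_sub_apply_add {t : ℕ → ℕ} {k₀ c q : ℕ}
    (hshift : ∀ k ≥ k₀, t (k + c) = t k + q) {k : ℕ} (hk : k₀ ≤ k) :
    t (k + c + 1) - t (k + c) = t (k + 1) - t k := by
  rw [show k + c + 1 = k + 1 + c by omega, hshift k hk, hshift (k + 1) (by omega)]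
  omega

namespace IsRunPartition

variable {z t : ℕ → ℕ}

lemma strictMono (ht : IsRunPartition z t) : StrictMono t := ht.2.1

lemma exists_mem_Ico (ht : IsRunPartition z t) (i : ℕ) : ∃ k, t k ≤ i ∧ i < t (k + 1) := by
  obtain ⟨ht0, htm, -, -⟩ := ht
  induction i with
  | zero =>
    have : t 0 < t (0 + 1) := htm (Nat.lt_succ_self 0)
    exact ⟨0, by omega, by omega⟩
  | succ i ih =>
    obtain ⟨k, hki, hik⟩ := ih
    rcases lt_or_ge (i + 1) (t (k + 1)) with h | h
    · exact ⟨k, by omega, h⟩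
    · have : t (k + 1) < t (k + 1 + 1) := htm (Nat.lt_succ_self _)
      exact ⟨k + 1, h, by omega⟩

lemma mem_range_iff (ht : IsRunPartition z t) {i : ℕ} (hi : 0 < i) :
    i ∈ Set.range t ↔ z i ≠ z (i - 1) := by
  have ⟨ht0, htm, hconst, hne⟩ := ht
  constructor
  · rintro ⟨_ | k, rfl⟩
    · simp_all
    · have hlt : t k < t (k + 1) := htm (Nat.lt_succ_self k)
      rw [hconst k (t (k + 1) - 1) (by omega) (by omega)]
      exact hne k
  · intro hzi
    obtain ⟨k, hki, hik⟩ := ht.exists_mem_Ico i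
    refine ⟨k, hki.antisymm ?_⟩
    by_contra! hlt
    exact hzi ((hconst k i hki hik).trans (hconst k (i - 1) (by omega) (by omega)).symm)

lemma not_eventually_const (ht : IsRunPartition z t) (a m : ℕ) : ¬ ∀ i, m ≤ i → z i = a := by
  intro h
  have htm := ht.strictMono
  apply ht.2.2.2 m
  rw [h _ (htm.le_apply.trans (htm.monotone (Nat.le_succ m))), h _ htm.le_apply]

variable {m q : ℕ}

lemma mem_range_add_iff (ht : IsRunPartition z t) (hper : ∀ i, m ≤ i → z (i + q) = z i)
    {i : ℕ} (hi : m < i) : i + q ∈ Set.range t ↔ i ∈ Set.range t := by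
  rw [ht.mem_range_iff (by omega), ht.mem_range_iff (by omega), hper i hi.le,
    show i + q - 1 = i - 1 + q by omega, hper (i - 1) (by omega)]

lemma apply_succ_add_of_apply_add (ht : IsRunPartition z t)
    (hper : ∀ i, m ≤ i → z (i + q) = z i) {k c : ℕ} (hk : m < t k)
    (h : t (k + c) = t k + q) : t (k + 1 + c) = t (k + 1) + q := by
  have htm := ht.strictMono
  have hk₁ : t k < t (k + 1) := htm (Nat.lt_succ_self k)
  have hkc : t (k + c) < t (k + c + 1) := htm (Nat.lt_succ_self _)
  rw [show k + 1 + c = k + c + 1 by omega]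
  apply le_antisymm
  · obtain ⟨j, hj⟩ := (ht.mem_range_add_iff hper (i := t (k + 1)) (by omega)).mpr ⟨k + 1, rfl⟩
    rw [← hj]
    exact htm.apply_succ_le_of_apply_lt (by omega)
  · obtain ⟨j, hj⟩ := (ht.mem_range_add_iff hper (i := t (k + c + 1) - q) (by omega)).mp
      ⟨k + c + 1, by omega⟩
    have := htm.apply_succ_le_of_apply_lt (a := k) (b := j) (by omega)
    omega

lemma exists_shift_of_periodic (ht : IsRunPartition z t) (hq : 0 < q)
    (hper : ∀ i, m ≤ i → z (i + q) = z i) : ∃ k₀ c, 0 < c ∧ ∀ k ≥ k₀, t (k + c) = t k + q := by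
  have htm := ht.strictMono
  have hk₀ : m < t (m + 1) := (Nat.lt_succ_self m).trans_le htm.le_apply
  obtain ⟨k₁, hk₁⟩ := (ht.mem_range_add_iff hper hk₀).mpr ⟨m + 1, rfl⟩
  have hlt : m + 1 < k₁ := htm.lt_iff_lt.mp (by omega)
  refine ⟨m + 1, k₁ - (m + 1), by omega, fun k hk => ?_⟩
  induction k, hk using Nat.le_induction with
  | base => rw [Nat.add_sub_cancel' hlt.le, hk₁]
  | succ k hk ih =>
    exact ht.apply_succ_add_of_apply_add hper (hk₀.trans_le (htm.monotone hk)) ih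

end IsRunPartition

theorem generalized_kolakoski_not_eventually_periodic_general (r s : ℕ) (z : ℕ → ℕ)
    (hz : IsKolakoski r s z) :
    ¬ EventuallyPeriodic z := by
  obtain ⟨t, ht, hlen⟩ := hz.2
  rintro ⟨m, q, hq, hper⟩
  induction q using Nat.strong_induction_on generalizing m with
  | _ q ih =>
  obtain ⟨k₀, c, hc, hshift⟩ := ht.exists_shift_of_periodic hq hper
  have hperc : ∀ k, k₀ ≤ k → z (k + c) = z k := fun k hk => by
    rw [hlen, hlen, apply_add_succ_sub_apply_add hshift hk]
  have hcq : c ≤ q := by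
    have := ht.strictMono.add_le_nat c k₀
    rw [add_comm c k₀, hshift k₀ le_rfl] at this
    omega
  rcases hcq.lt_or_eq with hlt | rfl
  · exact ih c hlt k₀ hc hperc
  · refine ht.not_eventually_const 1 k₀ fun k hk => ?_
    rw [hlen, ht.strictMono.apply_succ_eq_of_apply_add_eq hc hshift hk]
    omega

/-- Generalized Kolakoski sequences are not eventually periodic. -/
theorem generalized_kolakoski_not_eventually_periodic (r s : ℕ) (hr : 0 < r) (hs : 0 < s)
    (hrs : r ≠ s) (z : ℕ → ℕ) (hz : IsKolakoski r s z) :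
    ¬ EventuallyPeriodic z :=
  generalized_kolakoski_not_eventually_periodic_general r s z hz

end Kola
end

section
/- For a word w over {r,s}, w is a palindrome if and only if its reversal is; moreover if w is a C∞-word palindrome, then D(w) is also a palindrome. -/
/-! Run-length encoding commutes with reversal, and `D` adjusts the first and the last run
independently of each other, so `D` commutes with reversal; hence it maps palindromes to
palindromes. -/

namespace Kola

def consStep (a : ℕ) : List (ℕ × ℕ) → List (ℕ × ℕ)
  | [] => [(a, 1)]
  | (b, n) :: t => if a = b then (b, n + 1) :: t else (a, 1) :: (b, n) :: t

def snocStep (a : ℕ) : List (ℕ × ℕ) → List (ℕ × ℕ)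
  | [] => [(a, 1)]
  | [(b, n)] => if a = b then [(b, n + 1)] else [(b, n), (a, 1)]
  | p :: q :: t => p :: snocStep a (q :: t)

lemma rle_cons (a : ℕ) (l : List ℕ) : rle (a :: l) = consStep a (rle l) := by
  rcases h : rle l with _ | ⟨⟨b, n⟩, t⟩ <;> simp [rle, consStep, h]

lemma snocStep_append_singleton (a b n : ℕ) (L : List (ℕ × ℕ)) :
    snocStep a (L ++ [(b, n)]) = L ++ if a = b then [(b, n + 1)] else [(b, n), (a, 1)] := by
  induction L with
  | nil => simp [snocStep]
  | cons p L ih =>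
    cases L with
    | nil => simp [snocStep]
    | cons q t => simpa [snocStep] using ih

lemma reverse_consStep (a : ℕ) (L : List (ℕ × ℕ)) :
    (consStep a L).reverse = snocStep a L.reverse := by
  rcases L with _ | ⟨⟨b, n⟩, t⟩
  · simp [consStep, snocStep]
  · by_cases h : a = b <;> simp [consStep, h, snocStep_append_singleton]

lemma consStep_snocStep_comm (a c : ℕ) (L : List (ℕ × ℕ)) :
    consStep c (snocStep a L) = snocStep a (consStep c L) := by
  match L with
  | [] =>
    by_cases h : c = a
    · simp [consStep, snocStep, h]
    · simp [consStep, snocStep, h, Ne.symm h]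
  | [(b, n)] => by_cases h1 : a = b <;> by_cases h2 : c = b <;> simp [consStep, snocStep, h1, h2]
  | (b, n) :: _ :: _ => by_cases h : c = b <;> simp [consStep, snocStep, h]

lemma rle_append_singleton (a : ℕ) (l : List ℕ) : rle (l ++ [a]) = snocStep a (rle l) := by
  induction l with
  | nil => simp [rle, snocStep]
  | cons c l ih => rw [List.cons_append, rle_cons, ih, rle_cons, consStep_snocStep_comm]

theorem rle_reverse (l : List ℕ) : rle l.reverse = (rle l).reverse := by
  induction l with
  | nil => simp [rle]
  | cons a l ih => rw [rle_cons, reverse_consStep, ← ih, List.reverse_cons, rle_append_singleton]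

lemma fixRun_cons (r s : ℕ) (p : ℕ × ℕ) (t : List (ℕ × ℕ)) :
    fixRun r s (p :: t) = fixRun r s [p] ++ t := by
  obtain ⟨a, n⟩ := p
  simp only [fixRun]
  split_ifs <;> rfl

lemma reverse_fixRun_singleton (r s : ℕ) (p : ℕ × ℕ) :
    (fixRun r s [p]).reverse = fixRun r s [p] := by
  obtain ⟨a, n⟩ := p
  simp only [fixRun]
  split_ifs <;> rfl

lemma D_of_rle_eq (r s : ℕ) {w : List ℕ} {p q : ℕ × ℕ} {M : List (ℕ × ℕ)}
    (h : rle w = p :: (M ++ [q])) :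
    D r s w = (fixRun r s [p] ++ M ++ fixRun r s [q]).map Prod.snd := by
  obtain ⟨c, t, hct⟩ : ∃ c t, M ++ [q] = c :: t := by
    rcases M with _ | ⟨m, M⟩ <;> simp
  have hD : D r s w =
      (fixRun r s (fixRun r s (p :: (M ++ [q]))).reverse).reverse.map Prod.snd := by
    unfold D
    rw [h, hct]
  rw [hD, fixRun_cons]
  simp only [List.reverse_append, List.reverse_singleton, List.cons_append]
  rw [fixRun_cons r s q]
  simp only [List.reverse_append, List.reverse_reverse, List.nil_append,
    reverse_fixRun_singleton, List.append_assoc]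

theorem D_reverse (r s : ℕ) (w : List ℕ) : D r s w.reverse = (D r s w).reverse := by
  rcases List.eq_nil_or_concat' (rle w) with h | ⟨L, q, h⟩
  · have hrev : rle w.reverse = [] := by rw [rle_reverse, h, List.reverse_nil]
    simp [D, h, hrev]
  rcases L with _ | ⟨p, M⟩
  · obtain ⟨a, n⟩ := q
    have hrev : rle w.reverse = [(a, n)] := by rw [rle_reverse, h]; rfl
    simp only [D, h, hrev, List.nil_append]
    split_ifs <;> rfl
  · rw [List.cons_append] at h
    have hrev : rle w.reverse = q :: (M.reverse ++ [p]) := by rw [rle_reverse, h]; simp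
    rw [D_of_rle_eq r s h, D_of_rle_eq r s hrev]
    simp [← List.map_reverse, reverse_fixRun_singleton]

theorem palindrome_derivative_general (r s : ℕ) (w : List ℕ) :
    (w.reverse = w ↔ w.reverse.reverse = w.reverse) ∧
    (IsCInf r s w → w.reverse = w → (D r s w).reverse = D r s w) := by
  refine ⟨by rw [List.reverse_reverse, eq_comm], fun _ hw => ?_⟩
  rw [← D_reverse, hw]

/-- A word is a palindrome iff its reversal is; and the derivative of a
C∞-palindrome is again a palindrome. -/
theorem palindrome_derivative (r s : ℕ) (hr : 0 < r) (hrs : r < s) (w : List ℕ) :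
    (w.reverse = w ↔ w.reverse.reverse = w.reverse) ∧
    (IsCInf r s w → w.reverse = w → (D r s w).reverse = D r s w) :=
  palindrome_derivative_general r s w

end Kola
end
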